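/- Let u1, w1, u2, w2, y2 be words over B and v1, v2, x2 nonempty words with |v1| = |v2| + |x2|, such that u1·v1^i·w1 = u2·v2^i·w2·x2^i·y2 for all i ∈ ℕ. Then there exist a nonempty word x and contexts f1, f2 such that for every i ≥ 1 there exists k ∈ ℕ with v1^i = f1[x^k] and v2^i·w2·x2^i = f2[x^k]. -/

import Mathlib

/-- `wpow x n` is the word `x` repeated `n` times (`x^n`). -/
def wpow {B : Type*} (x : List B) : ℕ → List B
  | 0 => []
  | n + 1 => x ++ wpow x n

/-- Length of a longest common factor (infix) of `u` and `v`. -/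
noncomputable def lcfLen {B : Type*} (u v : List B) : ℕ :=
  sSup {n | ∃ w : List B, w.length = n ∧ w <:+: u ∧ w <:+: v}

/-- The factor distance `dist_f(u,v) = |u| + |v| - 2·|lcf(u,v)|`. -/
noncomputable def distf {B : Type*} (u v : List B) : ℕ :=
  u.length + v.length - 2 * lcfLen u v

/-- A context is a pair of words; `capp c w = c.1 ++ w ++ c.2` is `c[w]`. -/
def capp {B : Type*} (c : List B × List B) (w : List B) : List B :=
  c.1 ++ w ++ c.2

/-- The length `|c|` of a context. -/
def clen {B : Type*} (c : List B × List B) : ℕ :=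
  c.1.length + c.2.length

/-- Product of contexts: `(c·d)[w] = c[d[w]]`. -/
def cmul {B : Type*} (c d : List B × List B) : List B × List B :=
  (c.1 ++ d.1, d.2 ++ c.2)

/-- Power of a context: `c^n[w] = l^n ++ w ++ r^n`. -/
def cpow {B : Type*} (c : List B × List B) (n : ℕ) : List B × List B :=
  (wpow c.1 n, wpow c.2 n)

/-- A nonempty word `x` is primitive if `x = y^p` with `p ≥ 1` implies `p = 1`. -/
def Primitive {B : Type*} (x : List B) : Prop :=
  x ≠ [] ∧ ∀ (y : List B) (p : ℕ), 1 ≤ p → x = wpow y p → p = 1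

/-- Words `x` and `y` are conjugate. -/
def Conj {B : Type*} (x y : List B) : Prop :=
  ∃ t1 t2 : List B, x = t1 ++ t2 ∧ y = t2 ++ t1

/-- The triple of contexts `(c, d, e)` is `x`-commuting: there is a context `f`
such that for every `i ≥ 1` there is `k` with `(e^i·d·c)[ε] = f[x^k]`. -/
def XCommuting {B : Type*} (c d e : List B × List B) (x : List B) : Prop :=
  ∃ f : List B × List B, ∀ i : ℕ, 1 ≤ i → ∃ k : ℕ,
    capp (cmul (cpow e i) (cmul d c)) [] = capp f (wpow x k)

/-!
Let `a = u1 v1^ω`. The `i`-th equation agrees with `a` on its first `|u1| + i|v1|` letters, and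
since `|v1| > |v2|` this prefix eventually covers `u2 v2^i w2 x2^j` for any fixed `j`. Hence the
tail `Y` of `a` after `u2` is `|v2|`-periodic, begins with `v2^i w2 x2^j` for all `i, j`, and is
`|x2|`-periodic after `w2`. On that common tail `g = gcd(|v2|, |x2|)` is a period, and pulling it
back along the period `|v2|` makes `Y` itself `g`-periodic. Since `g ∣ |v1|`, both `v1^i` and
`v2^i w2 x2^i` are factors of `Y` containing the same power of one block of `Y` of length `g`.
-/

open Function Filter

section Words

variable {α : Type*}

theorem wpow_add (x : List α) (m n : ℕ) : wpow x (m + n) = wpow x m ++ wpow x n := by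
  induction m with
  | zero => simp [wpow]
  | succ m ih => rw [Nat.add_right_comm, wpow, wpow, ih, List.append_assoc]

theorem wpow_succ' (x : List α) (n : ℕ) : wpow x (n + 1) = wpow x n ++ x := by
  rw [wpow_add]; simp [wpow]

@[simp]
theorem length_wpow (x : List α) (n : ℕ) : (wpow x n).length = n * x.length := by
  induction n with
  | zero => simp [wpow]
  | succ n ih => simp [wpow, ih, Nat.succ_mul, Nat.add_comm]

def factor (f : ℕ → α) (p n : ℕ) : List α :=
  (List.range' p n).map f

@[simp]
theorem length_factor (f : ℕ → α) (p n : ℕ) : (factor f p n).length = n := by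
  simp [factor]

@[simp]
theorem getElem_factor (f : ℕ → α) (p n j : ℕ) (hj : j < (factor f p n).length) :
    (factor f p n)[j] = f (p + j) := by
  simp [factor]

theorem factor_add (f : ℕ → α) (p m n : ℕ) :
    factor f p (m + n) = factor f p m ++ factor f (p + m) n := by
  simp [factor, ← List.range'_append_1]

theorem factor_const_add (f : ℕ → α) (s p n : ℕ) :
    factor (fun t => f (s + t)) p n = factor f (s + p) n := by
  rw [factor, factor, ← List.map_add_range', List.map_map]
  rfl

theorem factor_eq_of_factor_add_eq_append {f : ℕ → α} {p m n : ℕ} {x y : List α}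
    (h : factor f p (m + n) = x ++ y) (hx : x.length = m) :
    factor f p m = x ∧ factor f (p + m) n = y :=
  List.append_inj (by rw [← factor_add, h]) (by simp [hx])

theorem factor_eq_take {f : ℕ → α} {n N : ℕ} {w : List α} (hN : factor f 0 N = w)
    (hn : n ≤ N) : factor f 0 n = w.take n := by
  obtain ⟨d, rfl⟩ := Nat.exists_eq_add_of_le hn
  rw [← hN, factor_add, List.take_left' (length_factor f 0 n)]

theorem Function.Periodic.factor_add_mul {f : ℕ → α} {c : ℕ} (h : Periodic f c) (p k n : ℕ) :
    factor f (p + k * c) n = factor f p n := by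
  have hk : Periodic f (k * c) := by simpa using h.nat_mul k
  apply List.ext_getElem (by simp)
  intro j _ _
  simp only [getElem_factor, Nat.add_right_comm p (k * c) j]
  exact hk (p + j)

theorem Function.Periodic.factor_mul {f : ℕ → α} {g : ℕ} (h : Periodic f g) (p k : ℕ) :
    factor f p (k * g) = wpow (factor f p g) k := by
  induction k with
  | zero => simp [factor, wpow]
  | succ k ih =>
    rw [Nat.succ_mul, Nat.add_comm, factor_add, ← Nat.one_mul g, h.factor_add_mul, Nat.one_mul,
      ih, wpow]

theorem Function.Periodic.factor_eq_capp_wpow {f : ℕ → α} {g : ℕ} (h : Periodic f g)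
    (c k r : ℕ) :
    factor f 0 (c + k * g + r) = capp (factor f 0 c, factor f c r) (wpow (factor f c g) k) := by
  simp only [factor_add, Nat.zero_add, h.factor_mul, h.factor_add_mul]
  rfl

theorem Function.Periodic.exists_capp_wpow {f : ℕ → α} {g : ℕ} (h : Periodic f g) (hg : 0 < g)
    (p r : ℕ) :
    ∃ x : List α, x ≠ [] ∧ ∃ f1 f2 : List α × List α, ∀ n, 0 < n → g ∣ n →
      factor f p n = capp f1 (wpow x (n / g - 1)) ∧
      factor f 0 (n + r) = capp f2 (wpow x (n / g - 1)) := by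
  refine ⟨factor f p g, List.ne_nil_of_length_pos (by simpa using hg), ([], factor f p g),
    (factor f 0 (p % g), factor f p (g - p % g + r)), fun n hn hgn => ?_⟩
  obtain ⟨k, rfl⟩ : ∃ k, n = (k + 1) * g := by
    obtain ⟨c, rfl⟩ := hgn
    exact ⟨c - 1, by rw [Nat.sub_add_cancel (Nat.pos_of_mul_pos_left hn), Nat.mul_comm]⟩
  have hpg : factor f (p % g) = factor f p := by
    conv_rhs => rw [← Nat.mod_add_div' p g]
    exact funext (h.factor_add_mul _ _ · |>.symm)
  have hsplit : (k + 1) * g + r = p % g + k * g + (g - p % g + r) := by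
    have := Nat.mod_lt p hg
    rw [Nat.succ_mul]
    omega
  rw [Nat.mul_div_cancel _ hg, Nat.add_sub_cancel, hsplit, h.factor_eq_capp_wpow, hpg,
    h.factor_mul, wpow_succ']
  exact ⟨rfl, rfl⟩

theorem Function.Periodic.nat_gcd {f : ℕ → α} {m n : ℕ} (hm : Periodic f m)
    (hn : Periodic f n) : Periodic f (m.gcd n) := by
  induction m, n using Nat.gcd.induction with
  | H0 n => simpa using hn
  | H1 m n _ ih =>
    rw [Nat.gcd_rec]
    refine ih (fun t => ?_) hm
    have hmk : Periodic f (n / m * m) := by simpa using hm.nat_mul (n / m)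
    rw [← hmk (t + n % m), Nat.add_assoc, Nat.mod_add_div']
    exact hn t

theorem Function.Periodic.of_const_add {f : ℕ → α} {p q s : ℕ} (hp : Periodic f p) (hp0 : 0 < p)
    (hq : Periodic (fun t => f (s + t)) q) : Periodic f q := by
  intro t
  have hsp : Periodic f (s * p) := by simpa using hp.nat_mul s
  have hs : s ≤ t + s * p := le_add_left (Nat.le_mul_of_pos_right s hp0)
  calc f (t + q) = f (s + (t + s * p - s + q)) := by
        rw [← hsp (t + q)]; congr 1; omega
    _ = f (s + (t + s * p - s)) := hq _
    _ = f t := by rw [Nat.add_sub_cancel' hs]; exact hsp t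

theorem periodic_of_eventually_factor_eq_wpow {f : ℕ → α} {p : ℕ} {v : List α} (hv : v ≠ [])
    (h : ∀ᶠ i in atTop, factor f p (i * v.length) = wpow v i) :
    Periodic (fun t => f (p + t)) v.length := by
  obtain ⟨i₀, hi₀⟩ := eventually_atTop.mp h
  intro t
  obtain ⟨i, hti, hi⟩ : ∃ i, t < i ∧ i₀ ≤ i := ⟨t + i₀ + 1, by omega, by omega⟩
  have hshift : factor f (p + v.length) (i * v.length) = factor f p (i * v.length) := by
    have := hi₀ (i + 1) (by omega)
    rw [Nat.succ_mul, Nat.add_comm, wpow] at this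
    rw [(factor_eq_of_factor_add_eq_append this rfl).2, hi₀ i hi]
  have ht : t < i * v.length :=
    Nat.lt_of_lt_of_le hti (Nat.le_mul_of_pos_right i (List.length_pos_iff.mpr hv))
  have := List.getElem_of_eq hshift (by simpa using ht)
  show f (p + (t + v.length)) = f (p + t)
  simpa [Nat.add_right_comm, Nat.add_assoc] using this

end Words

section OmegaWord

variable {α : Type*} {u v : List α}

/-- The infinite word `u v^ω`. -/
def omegaWord (u v : List α) (hv : v ≠ []) (n : ℕ) : α :=
  if h : n < u.length then u[n]
  else v[(n - u.length) % v.length]'(Nat.mod_lt _ (List.length_pos_iff.mpr hv))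

theorem periodic_omegaWord (hv : v ≠ []) :
    Periodic (fun t => omegaWord u v hv (u.length + t)) v.length := by
  intro t
  simp [omegaWord]

theorem factor_omegaWord_add_mul (hv : v ≠ []) (k i : ℕ) :
    factor (omegaWord u v hv) (u.length + k * v.length) (i * v.length) = wpow v i := by
  have hv' : factor (fun t => omegaWord u v hv (u.length + t)) 0 v.length = v :=
    List.ext_getElem (by simp) fun j hj _ => by simp_all [omegaWord, Nat.mod_eq_of_lt]
  rw [← factor_const_add, ← Nat.zero_add (k * v.length), (periodic_omegaWord hv).factor_add_mul,
    (periodic_omegaWord hv).factor_mul, hv']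

theorem factor_omegaWord (hv : v ≠ []) (i : ℕ) :
    factor (omegaWord u v hv) 0 (u.length + i * v.length) = u ++ wpow v i := by
  have hu : factor (omegaWord u v hv) 0 u.length = u :=
    List.ext_getElem (by simp) fun j hj _ => by simp_all [omegaWord]
  simpa [factor_add, hu] using factor_omegaWord_add_mul (u := u) hv 0 i

theorem exists_factor_omegaWord_eq_wpow (hv : v ≠ []) (s : ℕ) :
    ∃ p, ∀ i, factor (fun t => omegaWord u v hv (s + t)) p (i * v.length) = wpow v i := by
  -- skipping `s` periods of `v` gets past position `s`
  refine ⟨u.length + s * v.length - s, fun i => ?_⟩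
  have hs : s ≤ s * v.length := Nat.le_mul_of_pos_right _ (List.length_pos_iff.mpr hv)
  rw [factor_const_add, Nat.add_sub_cancel' (by omega), factor_omegaWord_add_mul]

end OmegaWord

section Pumping

variable {α : Type*} {u1 w1 u2 w2 y2 v1 v2 x2 : List α}

theorem factor_omegaWord_eq_of_pumping_of_le (hv1 : v1 ≠ []) (hx2 : x2 ≠ [])
    (hlen : v1.length = v2.length + x2.length)
    (h : ∀ i : ℕ, u1 ++ wpow v1 i ++ w1 = u2 ++ wpow v2 i ++ w2 ++ wpow x2 i ++ y2)
    {i j : ℕ} (hij : j + u2.length + w2.length ≤ i) :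
    factor (fun t => omegaWord u1 v1 hv1 (u2.length + t)) 0
        (i * v2.length + w2.length + j * x2.length) = wpow v2 i ++ w2 ++ wpow x2 j := by
  have hx2' : 1 ≤ x2.length := List.length_pos_iff.mpr hx2
  have hfit : u2.length + (i * v2.length + w2.length + j * x2.length)
      ≤ u1.length + i * v1.length := by
    have : (j + u2.length + w2.length) * 1 ≤ i * x2.length := Nat.mul_le_mul hij hx2'
    rw [hlen, Nat.mul_add]
    nlinarith
  have hprefix : factor (omegaWord u1 v1 hv1) 0
      (u2.length + (i * v2.length + w2.length + j * x2.length))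
      = u2 ++ (wpow v2 i ++ w2 ++ wpow x2 j) := by
    rw [factor_eq_take (factor_omegaWord hv1 i) hfit,
      ← List.take_append_of_le_length (l₂ := w1) (by simpa using hfit), h i,
      show wpow x2 i = wpow x2 j ++ wpow x2 (i - j) by
        rw [← wpow_add, Nat.add_sub_cancel' (by omega)]]
    have hsplit : u2 ++ wpow v2 i ++ w2 ++ (wpow x2 j ++ wpow x2 (i - j)) ++ y2
        = (u2 ++ (wpow v2 i ++ w2 ++ wpow x2 j)) ++ (wpow x2 (i - j) ++ y2) := by simp
    rw [hsplit, List.take_left' (by simp [Nat.add_assoc])]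
  simpa [factor_const_add] using (factor_eq_of_factor_add_eq_append hprefix rfl).2

theorem periodic_omegaWord_of_pumping (hv1 : v1 ≠ []) (hv2 : v2 ≠ []) (hx2 : x2 ≠ [])
    (hlen : v1.length = v2.length + x2.length)
    (h : ∀ i : ℕ, u1 ++ wpow v1 i ++ w1 = u2 ++ wpow v2 i ++ w2 ++ wpow x2 i ++ y2) :
    Periodic (fun t => omegaWord u1 v1 hv1 (u2.length + t)) v2.length := by
  have hpow : ∀ i ≥ u2.length + w2.length,
      factor (fun t => omegaWord u1 v1 hv1 (u2.length + t)) 0 (i * v2.length) = wpow v2 i := by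
    intro i hi
    have := factor_omegaWord_eq_of_pumping_of_le hv1 hx2 hlen h (i := i) (j := 0) (by omega)
    simp only [Nat.zero_mul, Nat.add_zero, wpow, List.append_nil] at this
    exact (factor_eq_of_factor_add_eq_append this (by simp)).1
  simpa using periodic_of_eventually_factor_eq_wpow (p := 0) hv2 (eventually_atTop.mpr ⟨_, hpow⟩)

theorem factor_omegaWord_eq_of_pumping (hv1 : v1 ≠ []) (hv2 : v2 ≠ []) (hx2 : x2 ≠ [])
    (hlen : v1.length = v2.length + x2.length)
    (h : ∀ i : ℕ, u1 ++ wpow v1 i ++ w1 = u2 ++ wpow v2 i ++ w2 ++ wpow x2 i ++ y2) (i j : ℕ) :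
    factor (fun t => omegaWord u1 v1 hv1 (u2.length + t)) 0
        (i * v2.length + w2.length + j * x2.length) = wpow v2 i ++ w2 ++ wpow x2 j := by
  obtain ⟨d, hd⟩ : ∃ d, d = j + u2.length + w2.length := ⟨_, rfl⟩
  have hlong := factor_omegaWord_eq_of_pumping_of_le hv1 hx2 hlen h (i := d + i) (j := j) (by omega)
  rw [show (d + i) * v2.length + w2.length + j * x2.length
      = d * v2.length + (i * v2.length + w2.length + j * x2.length) by ring, wpow_add] at hlong
  simp only [List.append_assoc] at hlong
  have htail := (factor_eq_of_factor_add_eq_append hlong (by simp)).2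
  rw [(periodic_omegaWord_of_pumping hv1 hv2 hx2 hlen h).factor_add_mul] at htail
  simpa using htail

theorem periodic_gcd_omegaWord_of_pumping (hv1 : v1 ≠ []) (hv2 : v2 ≠ []) (hx2 : x2 ≠ [])
    (hlen : v1.length = v2.length + x2.length)
    (h : ∀ i : ℕ, u1 ++ wpow v1 i ++ w1 = u2 ++ wpow v2 i ++ w2 ++ wpow x2 i ++ y2) :
    Periodic (fun t => omegaWord u1 v1 hv1 (u2.length + t)) (v2.length.gcd x2.length) := by
  have hv2' := periodic_omegaWord_of_pumping hv1 hv2 hx2 hlen h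
  have hx2' : Periodic (fun t => omegaWord u1 v1 hv1 (u2.length + (w2.length + t))) x2.length :=
    periodic_of_eventually_factor_eq_wpow hx2 <| .of_forall fun j => by
      have hpow := factor_omegaWord_eq_of_pumping hv1 hv2 hx2 hlen h 0 j
      simp only [Nat.zero_mul, Nat.zero_add, wpow, List.nil_append] at hpow
      simpa using (factor_eq_of_factor_add_eq_append hpow rfl).2
  exact hv2'.of_const_add (List.length_pos_iff.mpr hv2) ((hv2'.const_add _).nat_gcd hx2')

end Pumping

theorem comb_1_2 {B : Type*} (u1 w1 u2 w2 y2 v1 v2 x2 : List B)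
    (hv1 : v1 ≠ []) (hv2 : v2 ≠ []) (hx2 : x2 ≠ [])
    (hlen : v1.length = v2.length + x2.length)
    (h : ∀ i : ℕ,
      u1 ++ wpow v1 i ++ w1 = u2 ++ wpow v2 i ++ w2 ++ wpow x2 i ++ y2) :
    ∃ x : List B, x ≠ [] ∧ ∃ f1 f2 : List B × List B,
      ∀ i : ℕ, 1 ≤ i → ∃ k : ℕ,
        wpow v1 i = capp f1 (wpow x k) ∧
        wpow v2 i ++ w2 ++ wpow x2 i = capp f2 (wpow x k) := by
  obtain ⟨p, hp⟩ := exists_factor_omegaWord_eq_wpow (u := u1) hv1 u2.length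
  have hper := periodic_gcd_omegaWord_of_pumping hv1 hv2 hx2 hlen h
  obtain ⟨x, hx, f1, f2, hf⟩ :=
    hper.exists_capp_wpow (Nat.gcd_pos_of_pos_left _ (List.length_pos_iff.mpr hv2)) p w2.length
  refine ⟨x, hx, f1, f2, fun i hi => ?_⟩
  have hdvd : v2.length.gcd x2.length ∣ i * v1.length :=
    Dvd.dvd.mul_left (hlen ▸ dvd_add (Nat.gcd_dvd_left _ _) (Nat.gcd_dvd_right _ _)) i
  obtain ⟨hv1i, hrest⟩ := hf _ (Nat.mul_pos hi (List.length_pos_iff.mpr hv1)) hdvd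
  rw [hp] at hv1i
  rw [← factor_omegaWord_eq_of_pumping hv1 hv2 hx2 hlen h,
    show i * v2.length + w2.length + i * x2.length = i * v1.length + w2.length by rw [hlen]; ring]
  exact ⟨_, hv1i, hrest⟩
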